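/- Let A be an n×n Hermitian complex matrix, let Z be an n×k complex matrix which is an isometry (Zᴴ Z = I_k), and let f : ℝ → ℝ be a convex function. Then for every j ≥ 1 with 2j−1 ≤ k, λ_{2j-1}(f(Zᴴ A Z)) ≤ λ_j(Zᴴ f(A) Z), where λ_j(·) denotes the j-th largest eigenvalue counted with multiplicity. -/

import Mathlib

open Matrix

/-- The `j`-th largest eigenvalue of a Hermitian matrix (`0`-indexed, so `eigDesc hA ⟨0, _⟩`
is the largest), counted with multiplicity. -/
noncomputable def eigDesc {n : ℕ} {A : Matrix (Fin n) (Fin n) ℂ} (hA : A.IsHermitian)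
    (j : Fin n) : ℝ :=
  hA.eigenvalues (Tuple.sort hA.eigenvalues j.rev)

/-- Applying a real function to a Hermitian matrix via the functional calculus yields a
Hermitian matrix. -/
lemma isHermitian_cfc {n : ℕ} {A : Matrix (Fin n) (Fin n) ℂ} (hA : A.IsHermitian)
    (f : ℝ → ℝ) : (hA.cfc f).IsHermitian := by
  rw [← hA.cfc_eq]
  exact cfc_predicate f A

lemma isHermitian_half_smul {n : ℕ} {X : Matrix (Fin n) (Fin n) ℂ} (hX : X.IsHermitian) :
    ((2 : ℝ)⁻¹ • X).IsHermitian := by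
  show _ = _
  rw [Matrix.conjTranspose_smul, star_trivial, hX.eq]

lemma isHermitian_sum_conj {m n : ℕ} {A : Fin m → Matrix (Fin n) (Fin n) ℂ}
    (Z : Fin m → Matrix (Fin n) (Fin n) ℂ) (hA : ∀ i, (A i).IsHermitian) :
    (∑ i, (Z i)ᴴ * A i * Z i).IsHermitian := by
  show _ = _
  rw [Matrix.conjTranspose_sum]
  exact Finset.sum_congr rfl fun i _ => (isHermitian_conjTranspose_mul_mul (Z i) (hA i)).eq


/-!
Write `B = Zᴴ A Z`, `C = Zᴴ f(A) Z` and `c = λ_j(C)`. For `x ≠ 0`, Jensen's inequality in an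
eigenbasis of `A` gives `f(R_B(x)) = f(R_A(Zx)) ≤ R_{f(A)}(Zx) = R_C(x)` for the Rayleigh
quotients. The eigenvectors of `C` with eigenvalue `≤ c` span a space of dimension `k - j + 1`,
which therefore meets both the span of the top `j` and the span of the bottom `j` eigenvectors
of `B`. This produces `t ≥ λ_j(B)` and `s ≤ λ_{k-j+1}(B)` with `f(t), f(s) ≤ c`, so by convexity
`f ≤ c` on `[λ_{k-j+1}(B), λ_j(B)]`. Outside this interval lie at most `2j - 2` eigenvalues of
`B`, and the eigenvalues of `f(B)` are the `f(λ_i(B))`; hence `λ_{2j-1}(f(B)) ≤ c`.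
-/

open Finset

section sort

variable {α : Type*} [LinearOrder α] {k : ℕ} (μ : Fin k → α) (m : Fin k)

lemma le_card_filter_sort_rev_le : m.val + 1 ≤ #{i | μ (Tuple.sort μ m.rev) ≤ μ i} := by
  calc m.val + 1 = #(Ici m.rev) := by simp [Fin.card_Ici]; omega
    _ ≤ _ := card_le_card_of_injOn (Tuple.sort μ)
        (fun p hp => by simpa using Tuple.monotone_sort μ (mem_Ici.mp hp))
        (Tuple.sort μ).injective.injOn

lemma le_card_filter_le_sort_rev : k - m.val ≤ #{i | μ i ≤ μ (Tuple.sort μ m.rev)} := by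
  calc k - m.val = #(Iic m.rev) := by simp [Fin.card_Iic]; omega
    _ ≤ _ := card_le_card_of_injOn (Tuple.sort μ)
        (fun p hp => by simpa using Tuple.monotone_sort μ (mem_Iic.mp hp))
        (Tuple.sort μ).injective.injOn

lemma card_filter_sort_rev_lt_le : #{i | μ (Tuple.sort μ m.rev) < μ i} ≤ m.val := by
  have := le_card_filter_le_sort_rev μ m
  have := card_filter_add_card_filter_not (s := univ) (fun i => μ i ≤ μ (Tuple.sort μ m.rev))
  simp only [not_le, card_univ, Fintype.card_fin] at this
  omega

lemma card_filter_lt_sort_rev_le : #{i | μ i < μ (Tuple.sort μ m.rev)} ≤ k - 1 - m.val := by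
  have := le_card_filter_sort_rev_le μ m
  have := card_filter_add_card_filter_not (s := univ) (fun i => μ (Tuple.sort μ m.rev) ≤ μ i)
  simp only [not_le, card_univ, Fintype.card_fin] at this
  omega

lemma sort_rev_le_of_card_filter_lt_le {c : α} (h : #{i | c < μ i} ≤ m.val) :
    μ (Tuple.sort μ m.rev) ≤ c := by
  by_contra! hc
  have : #{i | μ (Tuple.sort μ m.rev) ≤ μ i} ≤ #{i | c < μ i} :=
    card_le_card <| monotone_filter_right _ fun _ _ => hc.trans_le
  have := le_card_filter_sort_rev_le μ m
  omega

end sort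

lemma card_filter_lt_apply_le_add {ι : Type*} [Fintype ι] (μ : ι → ℝ) {f : ℝ → ℝ}
    {a b c : ℝ} (hf : ∀ x ∈ Set.Icc a b, f x ≤ c) :
    #{i | c < f (μ i)} ≤ #{i | b < μ i} + #{i | μ i < a} := by
  classical
  refine (card_le_card fun i => ?_).trans (card_union_le _ _)
  simp only [mem_filter, mem_univ, true_and, mem_union]
  contrapose!
  exact fun hi => hf _ ⟨hi.2, hi.1⟩

namespace Matrix

lemma exists_ne_zero_mulVec_eq_zero_off {K n : Type*} [Field K] [Fintype n]
    (P Q : Matrix n n K) {S T : Finset n} (h : Fintype.card n < #S + #T) :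
    ∃ x ≠ 0, (∀ i ∉ S, (P *ᵥ x) i = 0) ∧ ∀ i ∉ T, (Q *ᵥ x) i = 0 := by
  classical
  let F : (n → K) →ₗ[K] ((Sᶜ : Finset n) → K) × ((Tᶜ : Finset n) → K) :=
    (LinearMap.pi fun i => LinearMap.proj i.1 ∘ₗ P.mulVecLin).prod
      (LinearMap.pi fun i => LinearMap.proj i.1 ∘ₗ Q.mulVecLin)
  have hF : LinearMap.ker F ≠ ⊥ := LinearMap.ker_ne_bot_of_finrank_lt <| by
    simp only [Module.finrank_prod, Module.finrank_fintype_fun_eq_card, Fintype.card_coe,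
      card_compl]
    have := S.card_le_univ
    have := T.card_le_univ
    omega
  obtain ⟨x, hxF, hx0⟩ := (Submodule.ne_bot_iff _).mp hF
  refine ⟨x, hx0, fun i hi => ?_, fun i hi => ?_⟩
  · exact congr_fun (congr_arg Prod.fst hxF) ⟨i, mem_compl.mpr hi⟩
  · exact congr_fun (congr_arg Prod.snd hxF) ⟨i, mem_compl.mpr hi⟩

variable {𝕜 m n : Type*} [RCLike 𝕜] [Fintype m] [Fintype n]

noncomputable def rayleighQuotient (M : Matrix n n 𝕜) (x : n → 𝕜) : ℝ :=
  RCLike.re (star x ⬝ᵥ M *ᵥ x) / RCLike.re (star x ⬝ᵥ x)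

lemma dotProduct_conjTranspose_mul_mul_mulVec (Z : Matrix n m 𝕜) (M : Matrix n n 𝕜)
    (x : m → 𝕜) : star x ⬝ᵥ (Zᴴ * M * Z) *ᵥ x = star (Z *ᵥ x) ⬝ᵥ M *ᵥ (Z *ᵥ x) := by
  simp only [star_mulVec, dotProduct_mulVec, vecMul_vecMul, mulVec_mulVec, Matrix.mul_assoc]

lemma dotProduct_star_mulVec_self_of_isometry [DecidableEq m] {Z : Matrix n m 𝕜}
    (hZ : Zᴴ * Z = 1) (x : m → 𝕜) : star (Z *ᵥ x) ⬝ᵥ Z *ᵥ x = star x ⬝ᵥ x := by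
  classical
  simpa [hZ] using (dotProduct_conjTranspose_mul_mul_mulVec Z 1 x).symm

lemma rayleighQuotient_conjTranspose_mul_mul [DecidableEq m] {Z : Matrix n m 𝕜}
    (hZ : Zᴴ * Z = 1) (M : Matrix n n 𝕜) (x : m → 𝕜) :
    rayleighQuotient (Zᴴ * M * Z) x = rayleighQuotient M (Z *ᵥ x) := by
  rw [rayleighQuotient, rayleighQuotient, dotProduct_conjTranspose_mul_mul_mulVec,
    dotProduct_star_mulVec_self_of_isometry hZ]

lemma re_dotProduct_diagonal_mulVec [DecidableEq n] (d : n → ℝ) (w : n → 𝕜) :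
    RCLike.re (star w ⬝ᵥ diagonal (RCLike.ofReal ∘ d) *ᵥ w) = ∑ i, ‖w i‖ ^ 2 * d i := by
  simp only [dotProduct, mulVec_diagonal, Pi.star_apply, RCLike.star_def, Function.comp_apply,
    map_sum]
  refine sum_congr rfl fun i _ => ?_
  rw [mul_left_comm, RCLike.conj_mul, ← RCLike.ofReal_pow, RCLike.re_ofReal_mul, RCLike.ofReal_re,
    mul_comm]

lemma re_dotProduct_star_self (w : n → 𝕜) : RCLike.re (star w ⬝ᵥ w) = ∑ i, ‖w i‖ ^ 2 := by
  simp only [dotProduct, Pi.star_apply, RCLike.star_def, map_sum, RCLike.conj_mul,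
    ← RCLike.ofReal_pow, RCLike.ofReal_re]

lemma rayleighQuotient_diagonal [DecidableEq n] (d : n → ℝ) (w : n → 𝕜) :
    rayleighQuotient (diagonal (RCLike.ofReal ∘ d)) w = univ.centerMass (‖w ·‖ ^ 2) d := by
  rw [rayleighQuotient, re_dotProduct_diagonal_mulVec, re_dotProduct_star_self, centerMass,
    smul_eq_mul, div_eq_inv_mul]
  simp only [smul_eq_mul]

namespace IsHermitian

variable [DecidableEq n] {M : Matrix n n 𝕜}

noncomputable def eigenCoords (hM : M.IsHermitian) (x : n → 𝕜) : n → 𝕜 :=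
  star (hM.eigenvectorUnitary : Matrix n n 𝕜) *ᵥ x

lemma eigenCoords_ne_zero (hM : M.IsHermitian) {x : n → 𝕜} (hx : x ≠ 0) :
    hM.eigenCoords x ≠ 0 := fun h => hx <| by
  rw [← one_mulVec x, ← mem_unitaryGroup_iff.mp hM.eigenvectorUnitary.2, ← mulVec_mulVec]
  exact (congrArg _ h).trans (mulVec_zero _)

lemma cfc_eq_conjTranspose_mul_mul (hM : M.IsHermitian) (g : ℝ → ℝ) :
    hM.cfc g = (star (hM.eigenvectorUnitary : Matrix n n 𝕜))ᴴ *
      diagonal (RCLike.ofReal ∘ g ∘ hM.eigenvalues) *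
        star (hM.eigenvectorUnitary : Matrix n n 𝕜) := by
  rw [IsHermitian.cfc, Unitary.conjStarAlgAut_apply, ← star_eq_conjTranspose, star_star]

lemma rayleighQuotient_cfc (hM : M.IsHermitian) (g : ℝ → ℝ) (x : n → 𝕜) :
    rayleighQuotient (hM.cfc g) x =
      univ.centerMass (‖hM.eigenCoords x ·‖ ^ 2) (g ∘ hM.eigenvalues) := by
  rw [hM.cfc_eq_conjTranspose_mul_mul, rayleighQuotient_conjTranspose_mul_mul,
    rayleighQuotient_diagonal, eigenCoords]
  rw [← star_eq_conjTranspose, star_star]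
  exact mem_unitaryGroup_iff.mp hM.eigenvectorUnitary.2

lemma rayleighQuotient_eq_centerMass (hM : M.IsHermitian) (x : n → 𝕜) :
    rayleighQuotient M x = univ.centerMass (‖hM.eigenCoords x ·‖ ^ 2) hM.eigenvalues := by
  have := hM.rayleighQuotient_cfc id x
  rwa [← hM.cfc_eq, cfc_id ℝ M hM.isSelfAdjoint] at this

lemma sum_sq_norm_eigenCoords_pos (hM : M.IsHermitian) {x : n → 𝕜} (hx : x ≠ 0)
    {S : Finset n} (hS : ∀ i ∉ S, hM.eigenCoords x i = 0) :
    0 < ∑ i ∈ S, ‖hM.eigenCoords x i‖ ^ 2 := by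
  obtain ⟨i, hi⟩ := Function.ne_iff.mp (hM.eigenCoords_ne_zero hx)
  have hiS : i ∈ S := by by_contra h; exact hi (hS i h)
  exact sum_pos' (fun _ _ => by positivity) ⟨i, hiS, pow_pos (norm_pos_iff.mpr hi) 2⟩

lemma rayleighQuotient_mem (hM : M.IsHermitian) {I : Set ℝ} (hI : Convex ℝ I) {S : Finset n}
    (hSI : ∀ i ∈ S, hM.eigenvalues i ∈ I) {x : n → 𝕜} (hx : x ≠ 0)
    (hS : ∀ i ∉ S, hM.eigenCoords x i = 0) : rayleighQuotient M x ∈ I := by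
  rw [hM.rayleighQuotient_eq_centerMass,
    ← centerMass_subset _ (subset_univ S) fun i _ hi => by simp [hS i hi]]
  exact hI.centerMass_mem (fun _ _ => by positivity) (hM.sum_sq_norm_eigenCoords_pos hx hS) hSI

lemma map_rayleighQuotient_le (hM : M.IsHermitian) {f : ℝ → ℝ} (hf : ConvexOn ℝ Set.univ f)
    {x : n → 𝕜} (hx : x ≠ 0) : f (rayleighQuotient M x) ≤ rayleighQuotient (hM.cfc f) x := by
  rw [hM.rayleighQuotient_eq_centerMass, hM.rayleighQuotient_cfc]
  exact hf.map_centerMass_le (fun _ _ => by positivity)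
    (hM.sum_sq_norm_eigenCoords_pos hx (S := univ) (by simp)) (fun _ _ => Set.mem_univ _)

lemma map_eigenvalues_cfc (hM : M.IsHermitian) (f : ℝ → ℝ) (hfM : (hM.cfc f).IsHermitian) :
    univ.val.map hfM.eigenvalues = univ.val.map (f ∘ hM.eigenvalues) := by
  apply Multiset.map_injective (RCLike.ofReal_injective (K := 𝕜))
  rw [Multiset.map_map, Multiset.map_map, ← hfM.roots_charpoly_eq_eigenvalues, ← hM.cfc_eq,
    hM.charpoly_cfc_eq, Polynomial.roots_prod]
  · simp
  · simp [prod_ne_zero_iff, Polynomial.X_sub_C_ne_zero]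

lemma card_filter_eigenvalues_cfc (hM : M.IsHermitian) (f : ℝ → ℝ)
    (hfM : (hM.cfc f).IsHermitian) (p : ℝ → Prop) [DecidablePred p] :
    #{i | p (hfM.eigenvalues i)} = #{i | p (f (hM.eigenvalues i))} := by
  simpa [Multiset.countP_map, ← card_val] using
    congrArg (Multiset.countP p) (hM.map_eigenvalues_cfc f hfM)

variable [DecidableEq m]

theorem exists_mem_apply_le_of_isometry {A : Matrix n n 𝕜} (hA : A.IsHermitian)
    {Z : Matrix n m 𝕜} (hZ : Zᴴ * Z = 1) {f : ℝ → ℝ} (hf : ConvexOn ℝ Set.univ f)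
    (hB : (Zᴴ * A * Z).IsHermitian) (hC : (Zᴴ * hA.cfc f * Z).IsHermitian)
    {I : Set ℝ} (hI : Convex ℝ I) {S : Finset m} (hSI : ∀ i ∈ S, hB.eigenvalues i ∈ I)
    {c : ℝ} (hcard : Fintype.card m < #S + #{i | hC.eigenvalues i ≤ c}) :
    ∃ t ∈ I, f t ≤ c := by
  obtain ⟨x, hx, hxS, hxc⟩ := exists_ne_zero_mulVec_eq_zero_off
    (star (hB.eigenvectorUnitary : Matrix m m 𝕜)) (star (hC.eigenvectorUnitary : Matrix m m 𝕜))
    hcard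
  have hZx : Z *ᵥ x ≠ 0 := fun h => hx <| by
    rw [← one_mulVec x, ← hZ, ← mulVec_mulVec, h, mulVec_zero]
  refine ⟨rayleighQuotient (Zᴴ * A * Z) x, hB.rayleighQuotient_mem hI hSI hx hxS, ?_⟩
  calc f (rayleighQuotient (Zᴴ * A * Z) x) = f (rayleighQuotient A (Z *ᵥ x)) := by
        rw [rayleighQuotient_conjTranspose_mul_mul hZ]
    _ ≤ rayleighQuotient (hA.cfc f) (Z *ᵥ x) := hA.map_rayleighQuotient_le hf hZx
    _ = rayleighQuotient (Zᴴ * hA.cfc f * Z) x :=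
        (rayleighQuotient_conjTranspose_mul_mul hZ _ _).symm
    _ ≤ c := hC.rayleighQuotient_mem (convex_Iic c) (fun i hi => by simpa using hi) hx hxc

end IsHermitian

end Matrix

theorem eig_compression_cfc_le
    {n k : ℕ} (A : Matrix (Fin n) (Fin n) ℂ) (hA : A.IsHermitian)
    (Z : Matrix (Fin n) (Fin k) ℂ) (hZ : Zᴴ * Z = 1)
    (f : ℝ → ℝ) (hf : ConvexOn ℝ Set.univ f)
    (j : ℕ) (hj : 1 ≤ j) (hjk : 2 * j - 1 ≤ k) :
    eigDesc (isHermitian_cfc (isHermitian_conjTranspose_mul_mul Z hA) f)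
        ⟨2 * j - 1 - 1, by omega⟩ ≤
      eigDesc (isHermitian_conjTranspose_mul_mul Z (isHermitian_cfc hA f))
        ⟨j - 1, by omega⟩ := by
  set hB := isHermitian_conjTranspose_mul_mul Z hA
  set hC := isHermitian_conjTranspose_mul_mul Z (isHermitian_cfc hA f)
  set c := eigDesc hC ⟨j - 1, by omega⟩
  set β := eigDesc hB ⟨j - 1, by omega⟩
  set α := eigDesc hB ⟨k - j, by omega⟩
  have hc : k - (j - 1) ≤ #{i | hC.eigenvalues i ≤ c} :=
    le_card_filter_le_sort_rev hC.eigenvalues ⟨j - 1, by omega⟩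
  have hβ : j - 1 + 1 ≤ #{i | β ≤ hB.eigenvalues i} :=
    le_card_filter_sort_rev_le hB.eigenvalues ⟨j - 1, by omega⟩
  have hα : k - (k - j) ≤ #{i | hB.eigenvalues i ≤ α} :=
    le_card_filter_le_sort_rev hB.eigenvalues ⟨k - j, by omega⟩
  obtain ⟨t, ht, hft⟩ := hA.exists_mem_apply_le_of_isometry hZ hf hB hC (convex_Ici β)
    (S := {i | β ≤ hB.eigenvalues i}) (fun i hi => by simpa using hi) (c := c)
    (by rw [Fintype.card_fin]; omega)
  obtain ⟨s, hs, hfs⟩ := hA.exists_mem_apply_le_of_isometry hZ hf hB hC (convex_Iic α)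
    (S := {i | hB.eigenvalues i ≤ α}) (fun i hi => by simpa using hi) (c := c)
    (by rw [Fintype.card_fin]; omega)
  have hαβ : ∀ x ∈ Set.Icc α β, f x ≤ c := fun x hx =>
    ((hf.convex_le c).ordConnected.out ⟨Set.mem_univ s, hfs⟩ ⟨Set.mem_univ t, hft⟩
      ⟨(Set.mem_Iic.mp hs).trans hx.1, hx.2.trans (Set.mem_Ici.mp ht)⟩).2
  refine sort_rev_le_of_card_filter_lt_le _ _ ?_
  rw [hB.card_filter_eigenvalues_cfc f]
  calc #{i | c < f (hB.eigenvalues i)}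
      ≤ #{i | β < hB.eigenvalues i} + #{i | hB.eigenvalues i < α} :=
        card_filter_lt_apply_le_add hB.eigenvalues hαβ
    _ ≤ (j - 1) + (k - 1 - (k - j)) :=
        add_le_add (card_filter_sort_rev_lt_le hB.eigenvalues ⟨j - 1, by omega⟩)
          (card_filter_lt_sort_rev_le hB.eigenvalues ⟨k - j, by omega⟩)
    _ = 2 * j - 1 - 1 := by omega
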